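/- arXiv:cond-mat/0603685 — 3 statements merged into one kernel-verified Lean document; each statement's English description precedes it below -/
import Mathlib

section
/- Let L ∈ S be a non-minimal vertex. Then Σ_{I, J ∈ S_min : sup(I, J) = L} μ(I)μ(J) = μ(L)²(1 − p_L⁻¹). -/
/-!
Every vertex carries the total weight of the leaves below it: its children split its leaves
into disjoint blocks and share its weight equally. Hence the pairs of leaves below `L` have total
weight `μ(L)²`, and those whose supremum lies strictly below `L` are exactly the pairs below a common
child `C`, of total weight `∑_C μ(C)² = μ(L)² / p_L`.
-/

open scoped Classical
open Finset

namespace DirectedTree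

section PartialOrder

variable {S : Type*} [PartialOrder S]

lemma eq_of_covBy_of_le (hchain : ∀ x y z : S, x ≤ y → x ≤ z → y ≤ z ∨ z ≤ y)
    {x C C' w : S} (hC : C ⋖ x) (hC' : C' ⋖ x) (hw : w ≤ C) (hw' : w ≤ C') : C = C' := by
  rcases hchain w C C' hw hw' with h | h
  · exact h.eq_of_not_lt fun hlt => hC.2 hlt hC'.1
  · exact (h.eq_of_not_lt fun hlt => hC'.2 hlt hC.1).symm

variable [Fintype S]

noncomputable def minimalsBelow (x : S) : Finset S := {I | IsMin I ∧ I ≤ x}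

noncomputable def children (x : S) : Finset S := {J | J ⋖ x}

@[simp]
lemma mem_minimalsBelow {x I : S} : I ∈ minimalsBelow x ↔ IsMin I ∧ I ≤ x := by
  simp [minimalsBelow]

@[simp]
lemma mem_children {x J : S} : J ∈ children x ↔ J ⋖ x := by
  simp [children]

lemma minimalsBelow_of_isMin {x : S} (hx : IsMin x) : minimalsBelow x = {x} := by
  ext I
  simp only [mem_minimalsBelow, mem_singleton]
  exact ⟨fun ⟨_, hIx⟩ => hIx.antisymm (hx hIx), by rintro rfl; exact ⟨hx, le_rfl⟩⟩

lemma children_nonempty {x : S} (hx : ¬IsMin x) : (children x).Nonempty := by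
  obtain ⟨y, hy⟩ := not_isMin_iff.1 hx
  obtain ⟨C, -, hC⟩ := exists_le_covBy_of_lt hy
  exact ⟨C, mem_children.2 hC⟩

lemma minimalsBelow_eq_biUnion_children {x : S} (hx : ¬IsMin x) :
    minimalsBelow x = (children x).biUnion minimalsBelow := by
  ext I
  simp only [mem_biUnion, mem_minimalsBelow, mem_children]
  constructor
  · rintro ⟨hI, hIx⟩
    obtain ⟨C, hIC, hC⟩ := exists_le_covBy_of_lt (hIx.lt_of_ne fun h => hx (h ▸ hI))
    exact ⟨C, hC, hI, hIC⟩
  · rintro ⟨C, hC, hI, hIC⟩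
    exact ⟨hI, hIC.trans hC.le⟩

lemma pairwiseDisjoint_minimalsBelow_children
    (hchain : ∀ x y z : S, x ≤ y → x ≤ z → y ≤ z ∨ z ≤ y) (x : S) :
    (children x : Set S).PairwiseDisjoint minimalsBelow := by
  intro C hC C' hC' hne
  refine disjoint_left.2 fun I hI hI' => hne ?_
  exact eq_of_covBy_of_le hchain (mem_children.1 hC) (mem_children.1 hC')
    (mem_minimalsBelow.1 hI).2 (mem_minimalsBelow.1 hI').2

variable {p : S → ℕ} {μ : S → ℝ}

lemma natCast_ne_zero_of_card_children (hcard : ∀ L : S, ¬IsMin L → #(children L) = p L)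
    {x : S} (hx : ¬IsMin x) : (p x : ℝ) ≠ 0 := by
  rw [← hcard x hx]
  exact_mod_cast (children_nonempty hx).card_pos.ne'

lemma sum_children_pow (hcard : ∀ L : S, ¬IsMin L → #(children L) = p L)
    (hμ : ∀ L J : S, J ⋖ L → μ J = μ L / p L) {x : S} (hx : ¬IsMin x) (n : ℕ) :
    ∑ C ∈ children x, μ C ^ n = p x * (μ x / p x) ^ n := by
  rw [sum_congr rfl fun C hC => by rw [hμ x C (mem_children.1 hC)], sum_const, hcard x hx,
    nsmul_eq_mul]

theorem sum_minimalsBelow (hchain : ∀ x y z : S, x ≤ y → x ≤ z → y ≤ z ∨ z ≤ y)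
    (hcard : ∀ L : S, ¬IsMin L → #(children L) = p L)
    (hμ : ∀ L J : S, J ⋖ L → μ J = μ L / p L) (x : S) :
    ∑ I ∈ minimalsBelow x, μ I = μ x := by
  induction x using WellFoundedLT.induction with
  | _ x ih =>
    by_cases hx : IsMin x
    · rw [minimalsBelow_of_isMin hx, sum_singleton]
    · have hsum : ∑ C ∈ children x, μ C = μ x := by
        simpa [mul_div_cancel₀ _ (natCast_ne_zero_of_card_children hcard hx)]
          using sum_children_pow hcard hμ hx 1
      rw [minimalsBelow_eq_biUnion_children hx,
        sum_biUnion (pairwiseDisjoint_minimalsBelow_children hchain x), ← hsum]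
      exact sum_congr rfl fun C hC => ih C (mem_children.1 hC).lt

end PartialOrder

lemma sum_product_mul_self {ι R : Type*} [CommSemiring R] (s : Finset ι) (f : ι → R) :
    ∑ q ∈ s ×ˢ s, f q.1 * f q.2 = (∑ i ∈ s, f i) ^ 2 := by
  rw [sum_product, sq, sum_mul_sum]

section SemilatticeSup

variable {S : Type*} [Fintype S] [SemilatticeSup S]

lemma sum_isMin_sup_eq_sum_filter_product {M : Type*} [AddCommMonoid M] (f : S → S → M) (L : S) :
    ∑ I ∈ univ.filter (fun I : S => IsMin I),
      ∑ J ∈ univ.filter (fun J : S => IsMin J ∧ I ⊔ J = L), f I J =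
    ∑ q ∈ minimalsBelow L ×ˢ minimalsBelow L with q.1 ⊔ q.2 = L, f q.1 q.2 := by
  refine (sum_finset_product' _ _ _ fun q => ?_).symm
  simp only [mem_filter, mem_product, mem_minimalsBelow, mem_univ, true_and]
  constructor
  · rintro ⟨⟨⟨hI, -⟩, hJ, -⟩, hsup⟩
    exact ⟨hI, hJ, hsup⟩
  · rintro ⟨hI, hJ, hsup⟩
    exact ⟨⟨⟨hI, hsup ▸ le_sup_left⟩, hJ, hsup ▸ le_sup_right⟩, hsup⟩

lemma filter_sup_ne_eq_biUnion_children (L : S) :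
    {q ∈ minimalsBelow L ×ˢ minimalsBelow L | q.1 ⊔ q.2 ≠ L} =
      (children L).biUnion fun C => minimalsBelow C ×ˢ minimalsBelow C := by
  ext ⟨I, J⟩
  simp only [mem_filter, mem_product, mem_biUnion, mem_minimalsBelow, mem_children]
  constructor
  · rintro ⟨⟨⟨hI, hIL⟩, hJ, hJL⟩, hne⟩
    obtain ⟨C, hle, hC⟩ := exists_le_covBy_of_lt ((sup_le hIL hJL).lt_of_ne hne)
    exact ⟨C, hC, ⟨hI, le_sup_left.trans hle⟩, hJ, le_sup_right.trans hle⟩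
  · rintro ⟨C, hC, ⟨hI, hIC⟩, hJ, hJC⟩
    refine ⟨⟨⟨hI, hIC.trans hC.le⟩, hJ, hJC.trans hC.le⟩, fun hsup => ?_⟩
    exact hC.lt.not_ge (hsup ▸ sup_le hIC hJC)

variable {p : S → ℕ} {μ : S → ℝ}

lemma sum_filter_sup_ne (hchain : ∀ x y z : S, x ≤ y → x ≤ z → y ≤ z ∨ z ≤ y)
    (hcard : ∀ L : S, ¬IsMin L → #(children L) = p L)
    (hμ : ∀ L J : S, J ⋖ L → μ J = μ L / p L) {L : S} (hL : ¬IsMin L) :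
    ∑ q ∈ minimalsBelow L ×ˢ minimalsBelow L with q.1 ⊔ q.2 ≠ L, μ q.1 * μ q.2 =
      μ L ^ 2 / p L := by
  have hdisj : (children L : Set S).PairwiseDisjoint fun C => minimalsBelow C ×ˢ minimalsBelow C :=
    fun C hC C' hC' hne => disjoint_product.2 <|
      .inl (pairwiseDisjoint_minimalsBelow_children hchain L hC hC' hne)
  rw [filter_sup_ne_eq_biUnion_children, sum_biUnion hdisj]
  simp only [sum_product_mul_self, sum_minimalsBelow hchain hcard hμ]
  rw [sum_children_pow hcard hμ hL]
  field_simp [natCast_ne_zero_of_card_children hcard hL]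

end SemilatticeSup

end DirectedTree

open DirectedTree

theorem double_sum_min_weights_sup_eq_general
    {S : Type*} [Fintype S] [SemilatticeSup S]
    (hchain : ∀ x y z : S, x ≤ y → x ≤ z → y ≤ z ∨ z ≤ y)
    (p : S → ℕ)
    (hcard : ∀ L : S, ¬ IsMin L →
      (Finset.univ.filter (fun J : S => J ⋖ L)).card = p L)
    (μ : S → ℝ)
    (hμ : ∀ L J : S, J ⋖ L → μ J = μ L / p L)
    (L : S) (hL : ¬ IsMin L) :
    ∑ I ∈ Finset.univ.filter (fun I : S => IsMin I),
      ∑ J ∈ Finset.univ.filter (fun J : S => IsMin J ∧ I ⊔ J = L),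
        μ I * μ J = μ L ^ 2 * (1 - (p L : ℝ)⁻¹) := by
  have hsplit := sum_filter_add_sum_filter_not (minimalsBelow L ×ˢ minimalsBelow L)
    (fun q : S × S => q.1 ⊔ q.2 = L) (fun q => μ q.1 * μ q.2)
  rw [sum_product_mul_self, sum_minimalsBelow hchain hcard hμ,
    sum_filter_sup_ne hchain hcard hμ hL] at hsplit
  rw [sum_isMin_sup_eq_sum_filter_product (fun I J => μ I * μ J), eq_sub_of_add_eq hsplit]
  field_simp [natCast_ne_zero_of_card_children hcard hL]

/-- In a finite directed tree `S` (finite partial order with greatest element `K`,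
binary suprema, totally ordered up-sets), where every non-minimal vertex `L`
has exactly `p L ≥ 2` children and the weight `μ` satisfies `μ K > 0` and
`μ J = μ L / p L` for every child `J` of `L`: if `L` is non-minimal, then
`Σ_{I,J ∈ S_min : sup(I,J) = L} μ(I) μ(J) = μ(L)² (1 − p_L⁻¹)`. -/
theorem double_sum_min_weights_sup_eq
    {S : Type*} [Fintype S] [SemilatticeSup S]
    (K : S) (hK : ∀ x : S, x ≤ K)
    (hchain : ∀ x y z : S, x ≤ y → x ≤ z → y ≤ z ∨ z ≤ y)
    (p : S → ℕ) (hp : ∀ L : S, ¬ IsMin L → 2 ≤ p L)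
    (hcard : ∀ L : S, ¬ IsMin L →
      (Finset.univ.filter (fun J : S => J ⋖ L)).card = p L)
    (μ : S → ℝ) (hμK : 0 < μ K)
    (hμ : ∀ L J : S, J ⋖ L → μ J = μ L / p L)
    (L : S) (hL : ¬ IsMin L) :
    ∑ I ∈ Finset.univ.filter (fun I : S => IsMin I),
      ∑ J ∈ Finset.univ.filter (fun J : S => IsMin J ∧ I ⊔ J = L),
        μ I * μ J = μ L ^ 2 * (1 - (p L : ℝ)⁻¹) :=
  double_sum_min_weights_sup_eq_general hchain p hcard μ hμ L hL
end

section
/- Σ_{I, J ∈ S_min, I ≠ J} μ(I)μ(J)·T(sup(I, J))² = Σ_{J ∈ S \ S_min} T(J)²·μ(J)²·(1 − p_J⁻¹). -/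
/-! Since up-sets are chains, every vertex strictly below a non-minimal `L` lies below exactly
one child of `L`. Hence the minimal elements below `L` carry total weight `μ L`, and the pairs
of them carry weight `μ L ^ 2`; those pairs whose supremum lies strictly below `L` sit below a
single child, which removes `p L · (μ L / p L) ^ 2`. What remains, `μ L ^ 2 (1 - 1 / p L)`, is
the weight of the pairs with supremum exactly `L`, and grouping the left-hand side by `I ⊔ J`
gives the identity. -/

open scoped Classical

open Finset

section Tree

variable {S : Type*}

lemma existsUnique_le_covBy_of_lt [PartialOrder S] [Finite S]
    (hchain : ∀ x y z : S, x ≤ y → x ≤ z → y ≤ z ∨ z ≤ y) {x L : S} (h : x < L) :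
    ∃! C, x ≤ C ∧ C ⋖ L := by
  obtain ⟨C, hxC, hCL⟩ := exists_le_covBy_of_lt h
  refine ⟨C, ⟨hxC, hCL⟩, fun C' ⟨hxC', hC'L⟩ => ?_⟩
  rcases hchain x C C' hxC hxC' with hle | hle
  · exact (hle.eq_or_lt.resolve_right fun hlt => hCL.2 hlt hC'L.1).symm
  · exact hle.eq_or_lt.resolve_right fun hlt => hC'L.2 hlt hCL.1

lemma sum_filter_lt_eq_sum_covBy {ι M : Type*} [AddCommMonoid M] [PartialOrder S] [Fintype S]
    (hchain : ∀ x y z : S, x ≤ y → x ≤ z → y ≤ z ∨ z ≤ y)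
    (L : S) (s : Finset ι) (f : ι → S) (g : ι → M) :
    ∑ a ∈ s with f a < L, g a = ∑ C with C ⋖ L, ∑ a ∈ s with f a ≤ C, g a := by
  simp only [sum_filter (s := s)]
  rw [sum_comm]
  refine sum_congr rfl fun a _ => ?_
  split_ifs with h
  · obtain ⟨C, ⟨hC, hCL⟩, huniq⟩ := existsUnique_le_covBy_of_lt hchain h
    rw [sum_eq_single_of_mem C (by simpa using hCL) fun C' hC' hne => if_neg fun hC'' =>
      hne (huniq C' ⟨hC'', (mem_filter.1 hC').2⟩), if_pos hC]
  · exact (sum_eq_zero fun C hC => if_neg fun hC' => h (hC'.trans_lt (mem_filter.1 hC).2.lt)).symm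

lemma sum_filter_le_eq_add_sum_covBy {ι M : Type*} [AddCommMonoid M] [PartialOrder S]
    [Fintype S] (hchain : ∀ x y z : S, x ≤ y → x ≤ z → y ≤ z ∨ z ≤ y)
    (L : S) (s : Finset ι) (f : ι → S) (g : ι → M) :
    ∑ a ∈ s with f a ≤ L, g a =
      ∑ a ∈ s with f a = L, g a + ∑ C with C ⋖ L, ∑ a ∈ s with f a ≤ C, g a := by
  rw [← sum_filter_lt_eq_sum_covBy hchain,
    ← sum_union (disjoint_filter.2 fun a _ h => h.not_lt), ← filter_or]
  simp only [le_iff_eq_or_lt]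

lemma sum_covBy_comp_eq [Preorder S] [Fintype S] {p : S → ℕ} {μ : S → ℝ} {L : S}
    (hcard : #{C | C ⋖ L} = p L) (hμ : ∀ C, C ⋖ L → μ C = μ L / p L) (F : ℝ → ℝ) :
    ∑ C with C ⋖ L, F (μ C) = p L * F (μ L / p L) := by
  rw [sum_congr rfl fun C hC => by rw [hμ C (mem_filter.1 hC).2], sum_const, hcard, nsmul_eq_mul]

lemma ne_zero_of_card_covBy_eq [PartialOrder S] [Fintype S] {n : ℕ} {L : S} (hL : ¬ IsMin L)
    (hcard : #{C | C ⋖ L} = n) : n ≠ 0 := by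
  obtain ⟨x, hxL⟩ := not_isMin_iff.1 hL
  obtain ⟨C, -, hCL⟩ := exists_le_covBy_of_lt hxL
  rw [← hcard, ← pos_iff_ne_zero, card_pos]
  exact ⟨C, by simpa using hCL⟩

noncomputable def leaves (S : Type*) [Preorder S] [Fintype S] : Finset S := {I | IsMin I}

lemma mem_leaves [Preorder S] [Fintype S] {I : S} : I ∈ leaves S ↔ IsMin I := by
  simp [leaves]

lemma sum_leaves_le_eq [PartialOrder S] [Fintype S]
    (hchain : ∀ x y z : S, x ≤ y → x ≤ z → y ≤ z ∨ z ≤ y)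
    {p : S → ℕ} {μ : S → ℝ}
    (hcard : ∀ L : S, ¬ IsMin L → #{C | C ⋖ L} = p L)
    (hμ : ∀ L C : S, C ⋖ L → μ C = μ L / p L) (L : S) :
    ∑ I ∈ leaves S with I ≤ L, μ I = μ L := by
  induction L using WellFoundedLT.induction with
  | _ L ih =>
  by_cases hL : IsMin L
  · have hleaf : {I ∈ leaves S | I ≤ L} = {L} := by
      ext I
      simp only [mem_filter, mem_leaves, mem_singleton]
      exact ⟨fun h => h.2.antisymm (hL h.2), fun h => by subst h; exact ⟨hL, le_rfl⟩⟩
    rw [hleaf, sum_singleton]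
  have hp : (p L : ℝ) ≠ 0 := Nat.cast_ne_zero.2 (ne_zero_of_card_covBy_eq hL (hcard L hL))
  have hL_not_leaf : ∑ I ∈ leaves S with I = L, μ I = 0 :=
    sum_eq_zero fun I hI => by
      rw [mem_filter, mem_leaves] at hI
      exact absurd (hI.2 ▸ hI.1) hL
  calc ∑ I ∈ leaves S with I ≤ L, μ I
      = ∑ C with C ⋖ L, μ C := by
        rw [sum_filter_le_eq_add_sum_covBy hchain L _ (fun I => I), hL_not_leaf, zero_add]
        exact sum_congr rfl fun C hC => ih C (mem_filter.1 hC).2.lt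
    _ = μ L := by rw [sum_covBy_comp_eq (hcard L hL) (hμ L) (fun x => x), mul_div_cancel₀ _ hp]

lemma IsMin.isMin_sup_iff [SemilatticeSup S] {I J : S} (hI : IsMin I) :
    IsMin (I ⊔ J) ↔ I = J := by
  refine ⟨fun h => ?_, fun h => by rwa [← h, sup_idem]⟩
  exact (h.eq_of_le le_sup_left).trans (h.eq_of_le le_sup_right).symm

lemma sum_leaves_pair_sup_le_eq [SemilatticeSup S] [Fintype S]
    (hchain : ∀ x y z : S, x ≤ y → x ≤ z → y ≤ z ∨ z ≤ y)
    {p : S → ℕ} {μ : S → ℝ}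
    (hcard : ∀ L : S, ¬ IsMin L → #{C | C ⋖ L} = p L)
    (hμ : ∀ L C : S, C ⋖ L → μ C = μ L / p L) (L : S) :
    ∑ q ∈ leaves S ×ˢ leaves S with q.1 ⊔ q.2 ≤ L, μ q.1 * μ q.2 = μ L ^ 2 := by
  simp only [sup_le_iff]
  rw [filter_product (· ≤ L) (· ≤ L), sum_product, ← sum_mul_sum,
    sum_leaves_le_eq hchain hcard hμ, sq]

lemma sum_leaves_pair_sup_eq [SemilatticeSup S] [Fintype S]
    (hchain : ∀ x y z : S, x ≤ y → x ≤ z → y ≤ z ∨ z ≤ y)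
    {p : S → ℕ} {μ : S → ℝ}
    (hcard : ∀ L : S, ¬ IsMin L → #{C | C ⋖ L} = p L)
    (hμ : ∀ L C : S, C ⋖ L → μ C = μ L / p L) {L : S} (hL : ¬ IsMin L) :
    ∑ q ∈ leaves S ×ˢ leaves S with q.1 ⊔ q.2 = L, μ q.1 * μ q.2 =
      μ L ^ 2 * (1 - (p L : ℝ)⁻¹) := by
  have hsplit := sum_filter_le_eq_add_sum_covBy hchain L (leaves S ×ˢ leaves S)
    (fun q => q.1 ⊔ q.2) (fun q => μ q.1 * μ q.2)
  rw [sum_leaves_pair_sup_le_eq hchain hcard hμ,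
    sum_congr rfl fun C _ => sum_leaves_pair_sup_le_eq hchain hcard hμ C,
    sum_covBy_comp_eq (hcard L hL) (hμ L) (fun x => x ^ 2)] at hsplit
  have hp : (p L : ℝ) ≠ 0 := Nat.cast_ne_zero.2 (ne_zero_of_card_covBy_eq hL (hcard L hL))
  rw [eq_sub_of_add_eq hsplit.symm]
  field_simp

end Tree

theorem trace_replica_matrix_squared_general
    {S : Type*} [Fintype S] [SemilatticeSup S]
    (hchain : ∀ x y z : S, x ≤ y → x ≤ z → y ≤ z ∨ z ≤ y)
    (p : S → ℕ)
    (hcard : ∀ L : S, ¬ IsMin L →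
      (Finset.univ.filter (fun J : S => J ⋖ L)).card = p L)
    (μ : S → ℝ)
    (hμ : ∀ L J : S, J ⋖ L → μ J = μ L / p L)
    (T : S → ℝ) :
    ∑ I ∈ Finset.univ.filter (fun I : S => IsMin I),
      ∑ J ∈ Finset.univ.filter (fun J : S => IsMin J ∧ J ≠ I),
        μ I * μ J * T (I ⊔ J) ^ 2 =
      ∑ J ∈ Finset.univ.filter (fun J : S => ¬ IsMin J),
        T J ^ 2 * μ J ^ 2 * (1 - (p J : ℝ)⁻¹) := by
  have hpairs : ∑ I with IsMin I, ∑ J with IsMin J ∧ J ≠ I, μ I * μ J * T (I ⊔ J) ^ 2 =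
      ∑ q ∈ leaves S ×ˢ leaves S with ¬ IsMin (q.1 ⊔ q.2),
        μ q.1 * μ q.2 * T (q.1 ⊔ q.2) ^ 2 := by
    rw [sum_filter (s := _ ×ˢ _), sum_product]
    refine sum_congr rfl fun I hI => ?_
    rw [← sum_filter]
    refine sum_congr (ext fun J => ?_) fun _ _ => rfl
    rw [mem_filter, mem_filter, mem_leaves, (mem_leaves.1 hI).isMin_sup_iff, ne_comm, Ne]
    exact and_iff_right (mem_univ J)
  rw [hpairs, ← sum_fiberwise_of_maps_to (t := {L | ¬ IsMin L}) (g := fun q => q.1 ⊔ q.2)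
    fun q hq => by simpa using (mem_filter.1 hq).2]
  refine sum_congr rfl fun L hL => ?_
  have hL : ¬ IsMin L := (mem_filter.1 hL).2
  rw [filter_filter, filter_congr fun q _ => and_iff_right_of_imp fun h => h ▸ hL,
    sum_congr rfl fun q hq => by rw [(mem_filter.1 hq).2], ← sum_mul,
    sum_leaves_pair_sup_eq hchain hcard hμ hL]
  ring

/-- In a finite directed tree `S` (finite partial order with greatest element `K`,
binary suprema, totally ordered up-sets), where every non-minimal vertex `L`
has exactly `p L ≥ 2` children and the weight `μ` satisfies `μ K > 0` and
`μ J = μ L / p L` for every child `J` of `L`, and `T : S → ℝ` is arbitrary: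
`Σ_{I,J ∈ S_min, I ≠ J} μ(I) μ(J) T(sup(I,J))²
  = Σ_{J ∈ S \ S_min} T(J)² μ(J)² (1 − p_J⁻¹)`. -/
theorem trace_replica_matrix_squared
    {S : Type*} [Fintype S] [SemilatticeSup S]
    (K : S) (hK : ∀ x : S, x ≤ K)
    (hchain : ∀ x y z : S, x ≤ y → x ≤ z → y ≤ z ∨ z ≤ y)
    (p : S → ℕ) (hp : ∀ L : S, ¬ IsMin L → 2 ≤ p L)
    (hcard : ∀ L : S, ¬ IsMin L →
      (Finset.univ.filter (fun J : S => J ⋖ L)).card = p L)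
    (μ : S → ℝ) (hμK : 0 < μ K)
    (hμ : ∀ L J : S, J ⋖ L → μ J = μ L / p L)
    (T : S → ℝ) :
    ∑ I ∈ Finset.univ.filter (fun I : S => IsMin I),
      ∑ J ∈ Finset.univ.filter (fun J : S => IsMin J ∧ J ≠ I),
        μ I * μ J * T (I ⊔ J) ^ 2 =
      ∑ J ∈ Finset.univ.filter (fun J : S => ¬ IsMin J),
        T J ^ 2 * μ J ^ 2 * (1 - (p J : ℝ)⁻¹) :=
  trace_replica_matrix_squared_general hchain p hcard μ hμ T
end

section
/- Σ_{A,B,C ∈ S_min, A ≠ B, B ≠ C, C ≠ A} μ(A)μ(B)μ(C)·T₁(sup(A, B))·T₂(sup(B, C))·T₃(sup(C, A)) = Σ_{L ∈ S \ S_min} μ(L)³(1 − p_L⁻¹)(1 − 2p_L⁻¹)·T₁(L)T₂(L)T₃(L) + Σ_{L ∈ S \ S_min} μ(L)(1 − p_L⁻¹)·Σ_{B ∈ S \ S_min, B < L} μ(B)²(1 − p_B⁻¹)·[T₁(L)T₂(L)T₃(B) + T₂(L)T₃(L)T₁(B) + T₃(L)T₁(L)T₂(B)]. -/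
/-!
For leaves `a, b, c` of a tree, the suprema `a ⊔ b`, `b ⊔ c`, `c ⊔ a` either all coincide, or
exactly one of them lies strictly below the other two, which are equal; splitting the sum along
these four cases produces the two sums on the right.

The weight of a vertex is the total weight of the leaves below it, and each child of `L` carries
`μ L / p L`. For `M < L`, the leaves `C` with `C ⊔ M = L` are those below `L` but not below the
child of `L` above `M`, so they weigh `μ L (1 - 1/p L)`; summing over `a ≠ b` gives
`∑ μ a μ b g (a ⊔ b) = ∑_L μ L² (1 - 1/p L) g L`. When all three suprema equal `L`, the leaf `c`
avoids the two children of `L` above `a` and `b`, which weighs `μ L (1 - 2/p L)`.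
-/

open scoped Classical

open Finset

section DistinctTriples

variable {α M : Type*} [AddCommMonoid M]

noncomputable def sumDistinctTriples (s : Finset α) (F : α → α → α → M) : M :=
  ∑ a ∈ s, ∑ b ∈ s, ∑ c ∈ s, if a ≠ b ∧ b ≠ c ∧ c ≠ a then F a b c else 0

lemma sum_filter_distinct_eq_sumDistinctTriples [Fintype α] (P : α → Prop)
    (F : α → α → α → M) :
    ∑ a ∈ univ.filter P, ∑ b ∈ univ.filter (fun b => P b ∧ a ≠ b),
      ∑ c ∈ univ.filter (fun c => P c ∧ b ≠ c ∧ c ≠ a), F a b c =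
      sumDistinctTriples (univ.filter P) F := by
  refine sum_congr rfl fun a _ => ?_
  rw [← filter_filter, sum_filter]
  refine sum_congr rfl fun b _ => ?_
  rw [← filter_filter, sum_filter]
  by_cases hab : a = b <;> simp [hab]

lemma sumDistinctTriples_rotate (s : Finset α) (F : α → α → α → M) :
    sumDistinctTriples s F = sumDistinctTriples s (fun a b c => F b c a) := by
  unfold sumDistinctTriples
  rw [sum_congr rfl fun a _ => sum_comm, sum_comm]
  exact sum_congr rfl fun c _ => sum_congr rfl fun a _ => sum_congr rfl fun b _ =>
    if_congr (by tauto) rfl rfl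

lemma sumDistinctTriples_add (s : Finset α) (F G : α → α → α → M) :
    sumDistinctTriples s (fun a b c => F a b c + G a b c) =
      sumDistinctTriples s F + sumDistinctTriples s G := by
  simp only [sumDistinctTriples, ite_add_zero, sum_add_distrib]

lemma sumDistinctTriples_eq_sum_ne (s : Finset α) (F : α → α → α → M) (G : α → α → M)
    (h : ∀ a ∈ s, ∀ b ∈ s, a ≠ b →
      ∑ c ∈ s, (if b ≠ c ∧ c ≠ a then F a b c else 0) = G a b) :
    sumDistinctTriples s F = ∑ a ∈ s, ∑ b ∈ s, if a ≠ b then G a b else 0 := by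
  refine sum_congr rfl fun a ha => sum_congr rfl fun b hb => ?_
  by_cases hab : a = b
  · simp [hab]
  · simp only [hab, ne_eq, not_false_eq_true, true_and, if_true, ← h a ha b hb hab]

end DistinctTriples

section Tree

variable {S : Type*} [SemilatticeSup S]

lemma sup_eq_sup_and_sup_eq_sup_iff {a b c : S} :
    a ⊔ b = b ⊔ c ∧ b ⊔ c = c ⊔ a ↔ c ≤ a ⊔ b ∧ a ≤ b ⊔ c ∧ b ≤ c ⊔ a := by
  constructor
  · rintro ⟨h₁, h₂⟩
    exact ⟨le_sup_right.trans h₁.ge, le_sup_right.trans h₂.ge, le_sup_left.trans h₂.le⟩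
  · rintro ⟨hc, ha, hb⟩
    exact ⟨le_antisymm (sup_le ha le_sup_left) (sup_le le_sup_right hc),
      le_antisymm (sup_le hb le_sup_left) (sup_le le_sup_right ha)⟩

variable (hchain : ∀ x y z : S, x ≤ y → x ≤ z → y ≤ z ∨ z ≤ y)

include hchain in
lemma eq_of_le_of_covBy {a c₁ c₂ L : S} (h₁ : a ≤ c₁) (h₂ : a ≤ c₂) (hc₁ : c₁ ⋖ L)
    (hc₂ : c₂ ⋖ L) : c₁ = c₂ := by
  rcases hchain a c₁ c₂ h₁ h₂ with h | h
  · exact ((hc₁.eq_or_eq h hc₂.le).resolve_right hc₂.ne).symm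
  · exact (hc₂.eq_or_eq h hc₁.le).resolve_right hc₁.ne

include hchain in
lemma sup_eq_of_not_le_sup {a b c : S} (h : ¬ c ≤ a ⊔ b) :
    b ⊔ c = c ⊔ (a ⊔ b) ∧ c ⊔ a = c ⊔ (a ⊔ b) := by
  constructor
  · rcases hchain b (b ⊔ c) (a ⊔ b) le_sup_left le_sup_right with h' | h'
    · exact absurd (le_sup_right.trans h') h
    · exact le_antisymm (sup_le (le_sup_right.trans le_sup_right) le_sup_left)
        (sup_le le_sup_right h')
  · rcases hchain a (c ⊔ a) (a ⊔ b) le_sup_right le_sup_left with h' | h'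
    · exact absurd (le_sup_left.trans h') h
    · exact le_antisymm (sup_le le_sup_left (le_sup_left.trans le_sup_right))
        (sup_le le_sup_left h')

include hchain in
lemma le_sup_of_not_le_sup {a b c : S} (h : ¬ c ≤ a ⊔ b) : a ≤ b ⊔ c ∧ b ≤ c ⊔ a := by
  obtain ⟨h₁, h₂⟩ := sup_eq_of_not_le_sup hchain h
  exact ⟨h₁ ▸ le_sup_left.trans le_sup_right, h₂ ▸ (le_sup_right.trans le_sup_right)⟩

include hchain in
lemma ite_sup_trichotomy {M : Type*} [AddMonoid M] (a b c : S) (x : M) :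
    (if a ⊔ b = b ⊔ c ∧ b ⊔ c = c ⊔ a then x else 0) + (if ¬ c ≤ a ⊔ b then x else 0) +
      (if ¬ a ≤ b ⊔ c then x else 0) + (if ¬ b ≤ c ⊔ a then x else 0) = x := by
  have h₁ := le_sup_of_not_le_sup hchain (a := a) (b := b) (c := c)
  have h₂ := le_sup_of_not_le_sup hchain (a := b) (b := c) (c := a)
  have h₃ := le_sup_of_not_le_sup hchain (a := c) (b := a) (c := b)
  rw [if_congr sup_eq_sup_and_sup_eq_sup_iff rfl rfl]
  by_cases hc : c ≤ a ⊔ b <;> by_cases ha : a ≤ b ⊔ c <;> by_cases hb : b ≤ c ⊔ a <;> simp_all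

include hchain in
lemma sumDistinctTriples_split_sup {M : Type*} [AddCommMonoid M] (s : Finset S)
    (F : S → S → S → M) :
    sumDistinctTriples s F =
      sumDistinctTriples s (fun a b c => if a ⊔ b = b ⊔ c ∧ b ⊔ c = c ⊔ a then F a b c else 0) +
      sumDistinctTriples s (fun a b c => if ¬ c ≤ a ⊔ b then F a b c else 0) +
      sumDistinctTriples s (fun a b c => if ¬ a ≤ b ⊔ c then F a b c else 0) +
      sumDistinctTriples s (fun a b c => if ¬ b ≤ c ⊔ a then F a b c else 0) := by
  simp only [← sumDistinctTriples_add, ite_sup_trichotomy hchain]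

variable [Fintype S]

include hchain in
lemma sup_eq_iff_not_le_of_covBy {C M c L : S} (hMc : M ≤ c) (hc : c ⋖ L) (hCL : C ≤ L) :
    C ⊔ M = L ↔ ¬ C ≤ c := by
  constructor
  · rintro h hCc
    exact hc.lt.not_ge (h ▸ sup_le hCc hMc)
  · intro hCc
    by_contra hne
    obtain ⟨c', hc'le, hc'⟩ :=
      exists_le_covBy_of_lt ((sup_le hCL (hMc.trans hc.le)).lt_of_ne hne)
    rw [eq_of_le_of_covBy hchain (le_sup_right.trans hc'le) hMc hc' hc] at hc'le
    exact hCc (le_sup_left.trans hc'le)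

end Tree

section Weight

variable {S : Type*} [Fintype S] [SemilatticeSup S]

noncomputable def leavesBelow (L : S) : Finset S := univ.filter fun A => IsMin A ∧ A ≤ L

noncomputable def children (L : S) : Finset S := univ.filter (· ⋖ L)

@[simp] lemma mem_leavesBelow {A L : S} : A ∈ leavesBelow L ↔ IsMin A ∧ A ≤ L := by
  simp [leavesBelow]

@[simp] lemma mem_children {c L : S} : c ∈ children L ↔ c ⋖ L := by
  simp [children]

lemma leavesBelow_mono {c L : S} (h : c ≤ L) : leavesBelow c ⊆ leavesBelow L :=
  fun _ hA => mem_leavesBelow.2 ⟨(mem_leavesBelow.1 hA).1, (mem_leavesBelow.1 hA).2.trans h⟩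

lemma leavesBelow_of_isMin {L : S} (hL : IsMin L) : leavesBelow L = {L} := by
  ext A
  simp only [mem_leavesBelow, mem_singleton]
  exact ⟨fun h => hL.eq_of_le h.2, by rintro rfl; exact ⟨hL, le_rfl⟩⟩

lemma children_nonempty {L : S} (hL : ¬ IsMin L) : (children L).Nonempty := by
  obtain ⟨_, hA⟩ := not_isMin_iff.1 hL
  obtain ⟨c, -, hc⟩ := exists_le_covBy_of_lt hA
  exact ⟨c, mem_children.2 hc⟩

lemma leavesBelow_eq_biUnion_children {L : S} (hL : ¬ IsMin L) :
    leavesBelow L = (children L).biUnion leavesBelow := by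
  ext A
  simp only [mem_biUnion, mem_leavesBelow, mem_children]
  constructor
  · rintro ⟨hA, hAL⟩
    obtain ⟨c, hAc, hc⟩ := exists_le_covBy_of_lt (hAL.lt_of_ne fun h => hL (h ▸ hA))
    exact ⟨c, hc, hA, hAc⟩
  · rintro ⟨c, hc, hA, hAc⟩
    exact ⟨hA, hAc.trans hc.le⟩

variable (hchain : ∀ x y z : S, x ≤ y → x ≤ z → y ≤ z ∨ z ≤ y)

include hchain in
lemma disjoint_leavesBelow {c₁ c₂ L : S} (hc₁ : c₁ ⋖ L) (hc₂ : c₂ ⋖ L) (hne : c₁ ≠ c₂) :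
    Disjoint (leavesBelow c₁) (leavesBelow c₂) :=
  disjoint_left.2 fun _ h₁ h₂ =>
    hne (eq_of_le_of_covBy hchain (mem_leavesBelow.1 h₁).2 (mem_leavesBelow.1 h₂).2 hc₁ hc₂)

variable (p : S → ℕ) (μ : S → ℝ)
  (hcard : ∀ L : S, ¬ IsMin L → (children L).card = p L)
  (hμ : ∀ L J : S, J ⋖ L → μ J = μ L / p L)

include hchain hcard hμ in
lemma sum_leavesBelow (L : S) : ∑ A ∈ leavesBelow L, μ A = μ L := by
  induction L using WellFoundedLT.induction with
  | ind L ih =>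
    by_cases hL : IsMin L
    · rw [leavesBelow_of_isMin hL, sum_singleton]
    have hp : (p L : ℝ) ≠ 0 := by
      rw [← hcard L hL]
      exact_mod_cast (children_nonempty hL).card_pos.ne'
    rw [leavesBelow_eq_biUnion_children hL,
      sum_biUnion fun c₁ h₁ c₂ h₂ => disjoint_leavesBelow hchain (mem_children.1 h₁)
        (mem_children.1 h₂),
      sum_congr rfl fun c hc => (ih c (mem_children.1 hc).lt).trans (hμ L c (mem_children.1 hc)),
      sum_const, hcard L hL, nsmul_eq_mul, mul_div_cancel₀ _ hp]

include hchain hcard hμ in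
lemma sum_leaves_sup_eq {M L : S} (hML : M < L) :
    ∑ C ∈ univ.filter (fun C => IsMin C ∧ C ⊔ M = L), μ C = μ L * (1 - (p L : ℝ)⁻¹) := by
  obtain ⟨c, hMc, hc⟩ := exists_le_covBy_of_lt hML
  have hfiber : univ.filter (fun C => IsMin C ∧ C ⊔ M = L) = leavesBelow L \ leavesBelow c := by
    ext C
    simp only [mem_filter, mem_univ, true_and, mem_sdiff, mem_leavesBelow]
    constructor
    · rintro ⟨hC, h⟩
      have hCL : C ≤ L := h ▸ le_sup_left
      exact ⟨⟨hC, hCL⟩, fun h' => (sup_eq_iff_not_le_of_covBy hchain hMc hc hCL).1 h h'.2⟩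
    · rintro ⟨⟨hC, hCL⟩, h⟩
      exact ⟨hC, (sup_eq_iff_not_le_of_covBy hchain hMc hc hCL).2 fun h' => h ⟨hC, h'⟩⟩
  rw [hfiber, sum_sdiff_eq_sub (leavesBelow_mono hc.le), sum_leavesBelow hchain p μ hcard hμ,
    sum_leavesBelow hchain p μ hcard hμ, hμ L c hc, div_eq_mul_inv]
  ring

include hchain hcard hμ in
lemma sum_leaves_sup_eq_and_sup_eq {a b L : S} (ha : a < L) (hb : b < L) (hab : a ⊔ b = L) :
    ∑ C ∈ univ.filter (fun C => IsMin C ∧ C ⊔ a = L ∧ C ⊔ b = L), μ C =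
      μ L * (1 - 2 * (p L : ℝ)⁻¹) := by
  obtain ⟨ca, hac, hca⟩ := exists_le_covBy_of_lt ha
  obtain ⟨cb, hbc, hcb⟩ := exists_le_covBy_of_lt hb
  have hne : ca ≠ cb := by
    rintro rfl
    exact hca.lt.not_ge (hab ▸ sup_le hac hbc)
  have hfiber : univ.filter (fun C => IsMin C ∧ C ⊔ a = L ∧ C ⊔ b = L) =
      leavesBelow L \ (leavesBelow ca ∪ leavesBelow cb) := by
    ext C
    simp only [mem_filter, mem_univ, true_and, mem_sdiff, mem_union, mem_leavesBelow]
    constructor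
    · rintro ⟨hC, h₁, h₂⟩
      have hCL : C ≤ L := h₁ ▸ le_sup_left
      rw [sup_eq_iff_not_le_of_covBy hchain hac hca hCL] at h₁
      rw [sup_eq_iff_not_le_of_covBy hchain hbc hcb hCL] at h₂
      exact ⟨⟨hC, hCL⟩, by tauto⟩
    · rintro ⟨⟨hC, hCL⟩, h⟩
      rw [sup_eq_iff_not_le_of_covBy hchain hac hca hCL,
        sup_eq_iff_not_le_of_covBy hchain hbc hcb hCL]
      tauto
  rw [hfiber, sum_sdiff_eq_sub (union_subset (leavesBelow_mono hca.le) (leavesBelow_mono hcb.le)),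
    sum_union (disjoint_leavesBelow hchain hca hcb hne), sum_leavesBelow hchain p μ hcard hμ,
    sum_leavesBelow hchain p μ hcard hμ, sum_leavesBelow hchain p μ hcard hμ, hμ L ca hca,
    hμ L cb hcb, div_eq_mul_inv]
  ring

include hchain hcard hμ in
lemma sum_leaves_not_le_mul_sup (M : S) (g : S → ℝ) :
    ∑ C ∈ univ.filter (fun C => IsMin C ∧ ¬ C ≤ M), μ C * g (C ⊔ M) =
      ∑ L ∈ univ.filter (M < ·), μ L * (1 - (p L : ℝ)⁻¹) * g L := by
  rw [← sum_fiberwise_of_maps_to (t := univ.filter (M < ·)) (g := (· ⊔ M))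
    fun C hC => mem_filter.2 ⟨mem_univ _, right_lt_sup.2 (mem_filter.1 hC).2.2⟩]
  refine sum_congr rfl fun L hL => ?_
  have hML : M < L := (mem_filter.1 hL).2
  have hfiber : (univ.filter fun C => IsMin C ∧ ¬ C ≤ M).filter (· ⊔ M = L) =
      univ.filter (fun C => IsMin C ∧ C ⊔ M = L) := by
    ext C
    simp only [mem_filter, mem_univ, true_and]
    constructor
    · rintro ⟨⟨hC, -⟩, h⟩
      exact ⟨hC, h⟩
    · rintro ⟨hC, h⟩
      exact ⟨⟨hC, fun h' => hML.ne ((sup_eq_right.2 h').symm.trans h)⟩, h⟩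
  rw [hfiber, sum_congr rfl fun C hC => by rw [(mem_filter.1 hC).2.2], ← sum_mul,
    sum_leaves_sup_eq hchain p μ hcard hμ hML]

include hchain hcard hμ in
lemma sum_leaves_ne_mul_sup (g : S → ℝ) :
    ∑ A ∈ univ.filter (fun A => IsMin A), ∑ B ∈ univ.filter (fun B => IsMin B),
      (if A ≠ B then μ A * μ B * g (A ⊔ B) else 0) =
      ∑ L ∈ univ.filter (fun L => ¬ IsMin L), μ L ^ 2 * (1 - (p L : ℝ)⁻¹) * g L := by
  have inner : ∀ A ∈ univ.filter (fun A => IsMin A),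
      ∑ B ∈ univ.filter (fun B => IsMin B), (if A ≠ B then μ A * μ B * g (A ⊔ B) else 0) =
        ∑ L ∈ univ.filter (A < ·), μ A * (μ L * (1 - (p L : ℝ)⁻¹) * g L) := by
    intro A hA
    have hAmin : IsMin A := (mem_filter.1 hA).2
    rw [← mul_sum, ← sum_leaves_not_le_mul_sup hchain p μ hcard hμ A, mul_sum, ← sum_filter,
      filter_filter]
    refine sum_congr (filter_congr fun B _ => and_congr_right fun _ => ?_) fun B _ => ?_
    · exact ⟨fun h h' => h (hAmin.eq_of_le h').symm, fun h h' => h (h' ▸ le_rfl)⟩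
    · rw [sup_comm]; ring
  rw [sum_congr rfl inner, sum_comm' (t' := univ.filter (fun L => ¬ IsMin L)) (s' := leavesBelow)]
  · refine sum_congr rfl fun L _ => ?_
    rw [← sum_mul, sum_leavesBelow hchain p μ hcard hμ]
    ring
  · intro A L
    simp only [mem_filter, mem_univ, true_and, mem_leavesBelow]
    constructor
    · rintro ⟨hA, hAL⟩
      exact ⟨⟨hA, hAL.le⟩, not_isMin_of_lt hAL⟩
    · rintro ⟨⟨hA, hAL⟩, hL⟩
      exact ⟨hA, hAL.lt_of_ne (by rintro rfl; exact hL hA)⟩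

end Weight

section CyclicSum

variable {S : Type*} [SemilatticeSup S]

def cyclicProduct (μ T₁ T₂ T₃ : S → ℝ) (a b c : S) : ℝ :=
  μ a * μ b * μ c * T₁ (a ⊔ b) * T₂ (b ⊔ c) * T₃ (c ⊔ a)

lemma cyclicProduct_rotate (μ T₁ T₂ T₃ : S → ℝ) (a b c : S) :
    cyclicProduct μ T₁ T₂ T₃ b c a = cyclicProduct μ T₃ T₁ T₂ a b c := by
  simp only [cyclicProduct]
  ring

variable [Fintype S]

lemma sum_mul_sum_lt_comm (x : S → ℝ) (f : S → S → ℝ) :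
    ∑ L ∈ univ.filter (fun L => ¬ IsMin L),
      x L * ∑ B ∈ univ.filter (fun B => ¬ IsMin B ∧ B < L), f L B =
    ∑ B ∈ univ.filter (fun B => ¬ IsMin B), ∑ L ∈ univ.filter (B < ·), x L * f L B := by
  simp only [mul_sum]
  refine sum_comm' fun L B => ?_
  simp only [mem_filter, mem_univ, true_and]
  exact ⟨fun h => ⟨h.2.2, h.2.1⟩, fun h => ⟨not_isMin_of_lt h.1, h.2, h.1⟩⟩

variable (hchain : ∀ x y z : S, x ≤ y → x ≤ z → y ≤ z ∨ z ≤ y)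
  (p : S → ℕ) (μ : S → ℝ)
  (hcard : ∀ L : S, ¬ IsMin L → (children L).card = p L)
  (hμ : ∀ L J : S, J ⋖ L → μ J = μ L / p L)
  (T₁ T₂ T₃ : S → ℝ)

include hchain hcard hμ in
lemma sumDistinctTriples_sup_eq_sup :
    sumDistinctTriples (univ.filter (fun A => IsMin A)) (fun a b c =>
      if a ⊔ b = b ⊔ c ∧ b ⊔ c = c ⊔ a then cyclicProduct μ T₁ T₂ T₃ a b c else 0) =
    ∑ L ∈ univ.filter (fun L => ¬ IsMin L),
      μ L ^ 3 * (1 - (p L : ℝ)⁻¹) * (1 - 2 * (p L : ℝ)⁻¹) * T₁ L * T₂ L * T₃ L := by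
  set g : S → ℝ := fun L => T₁ L * T₂ L * T₃ L * (μ L * (1 - 2 * (p L : ℝ)⁻¹))
  have inner : ∀ a ∈ univ.filter (fun A => IsMin A), ∀ b ∈ univ.filter (fun A => IsMin A),
      a ≠ b → ∑ c ∈ univ.filter (fun A => IsMin A), (if b ≠ c ∧ c ≠ a then
        (if a ⊔ b = b ⊔ c ∧ b ⊔ c = c ⊔ a then cyclicProduct μ T₁ T₂ T₃ a b c else 0) else 0) =
        μ a * μ b * g (a ⊔ b) := by
    intro a ha b hb hab
    have ha : a < a ⊔ b := left_lt_sup.2 fun h => hab ((mem_filter.1 ha).2.eq_of_le h).symm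
    have hb : b < a ⊔ b := right_lt_sup.2 fun h => hab ((mem_filter.1 hb).2.eq_of_le h)
    dsimp only [g]
    rw [← sum_leaves_sup_eq_and_sup_eq hchain p μ hcard hμ ha hb rfl, ← filter_filter,
      sum_filter (s := univ.filter fun A => IsMin A), mul_sum, mul_sum]
    refine sum_congr rfl fun c _ => ?_
    by_cases hQ : c ⊔ a = a ⊔ b ∧ c ⊔ b = a ⊔ b
    · have hbc : b ≠ c := by
        rintro rfl
        exact hb.ne ((sup_idem _).symm.trans hQ.2)
      have hca : c ≠ a := by
        rintro rfl
        exact ha.ne ((sup_idem _).symm.trans hQ.1)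
      have hP : a ⊔ b = b ⊔ c ∧ b ⊔ c = c ⊔ a :=
        ⟨by rw [sup_comm b, hQ.2], by rw [sup_comm b, hQ.2, hQ.1]⟩
      rw [if_pos ⟨hbc, hca⟩, if_pos hP, if_pos hQ, cyclicProduct, ← hP.1, ← hP.1.trans hP.2]
      ring
    · rw [if_neg hQ, mul_zero, mul_zero]
      refine ite_eq_right_iff.2 fun _ => ite_eq_right_iff.2 fun hP => absurd ?_ hQ
      exact ⟨(hP.1.trans hP.2).symm, sup_comm c b ▸ hP.1.symm⟩
  rw [sumDistinctTriples_eq_sum_ne _ _ _ inner, sum_leaves_ne_mul_sup hchain p μ hcard hμ g]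
  exact sum_congr rfl fun L _ => by ring

include hchain hcard hμ in
lemma sumDistinctTriples_not_le_sup :
    sumDistinctTriples (univ.filter (fun A => IsMin A)) (fun a b c =>
      if ¬ c ≤ a ⊔ b then cyclicProduct μ T₁ T₂ T₃ a b c else 0) =
    ∑ M ∈ univ.filter (fun M => ¬ IsMin M), ∑ L ∈ univ.filter (M < ·),
      μ L * (1 - (p L : ℝ)⁻¹) * (μ M ^ 2 * (1 - (p M : ℝ)⁻¹) * (T₂ L * T₃ L * T₁ M)) := by
  set g : S → ℝ := fun M =>
    T₁ M * ∑ L ∈ univ.filter (M < ·), μ L * (1 - (p L : ℝ)⁻¹) * (T₂ L * T₃ L)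
  have inner : ∀ a ∈ univ.filter (fun A => IsMin A), ∀ b ∈ univ.filter (fun A => IsMin A),
      a ≠ b → ∑ c ∈ univ.filter (fun A => IsMin A), (if b ≠ c ∧ c ≠ a then
        (if ¬ c ≤ a ⊔ b then cyclicProduct μ T₁ T₂ T₃ a b c else 0) else 0) =
        μ a * μ b * g (a ⊔ b) := by
    intro a _ b _ _
    dsimp only [g]
    rw [← sum_leaves_not_le_mul_sup hchain p μ hcard hμ (a ⊔ b) (fun L => T₂ L * T₃ L),
      ← filter_filter, sum_filter (s := univ.filter fun A => IsMin A), mul_sum, mul_sum]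
    refine sum_congr rfl fun c _ => ?_
    by_cases hc : c ≤ a ⊔ b
    · simp [hc]
    · have hbc : b ≠ c := by
        rintro rfl
        exact hc le_sup_right
      have hca : c ≠ a := by
        rintro rfl
        exact hc le_sup_left
      obtain ⟨h₁, h₂⟩ := sup_eq_of_not_le_sup hchain hc
      rw [if_pos ⟨hbc, hca⟩, if_pos hc, if_pos hc, cyclicProduct, h₁, h₂]
      ring
  rw [sumDistinctTriples_eq_sum_ne _ _ _ inner, sum_leaves_ne_mul_sup hchain p μ hcard hμ g]
  refine sum_congr rfl fun M _ => ?_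
  dsimp only [g]
  rw [mul_sum, mul_sum]
  exact sum_congr rfl fun L _ => by ring

end CyclicSum

theorem trace_cubic_replica_matrices_general
    {S : Type*} [Fintype S] [SemilatticeSup S]
    (hchain : ∀ x y z : S, x ≤ y → x ≤ z → y ≤ z ∨ z ≤ y)
    (p : S → ℕ)
    (hcard : ∀ L : S, ¬ IsMin L →
      (Finset.univ.filter (fun J : S => J ⋖ L)).card = p L)
    (μ : S → ℝ)
    (hμ : ∀ L J : S, J ⋖ L → μ J = μ L / p L)
    (T₁ T₂ T₃ : S → ℝ) :
    ∑ A ∈ Finset.univ.filter (fun A : S => IsMin A),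
      ∑ B ∈ Finset.univ.filter (fun B : S => IsMin B ∧ A ≠ B),
        ∑ C ∈ Finset.univ.filter (fun C : S => IsMin C ∧ B ≠ C ∧ C ≠ A),
          μ A * μ B * μ C * T₁ (A ⊔ B) * T₂ (B ⊔ C) * T₃ (C ⊔ A) =
      (∑ L ∈ Finset.univ.filter (fun L : S => ¬ IsMin L),
        μ L ^ 3 * (1 - (p L : ℝ)⁻¹) * (1 - 2 * (p L : ℝ)⁻¹) *
          T₁ L * T₂ L * T₃ L)
      + ∑ L ∈ Finset.univ.filter (fun L : S => ¬ IsMin L),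
          μ L * (1 - (p L : ℝ)⁻¹) *
            ∑ B ∈ Finset.univ.filter (fun B : S => ¬ IsMin B ∧ B < L),
              μ B ^ 2 * (1 - (p B : ℝ)⁻¹) *
                (T₁ L * T₂ L * T₃ B + T₂ L * T₃ L * T₁ B +
                  T₃ L * T₁ L * T₂ B) := by
  -- the cases `¬ a ≤ b ⊔ c` and `¬ b ≤ c ⊔ a` are the case `¬ c ≤ a ⊔ b` for a rotated triple
  have h₂ := sumDistinctTriples_not_le_sup hchain p μ hcard hμ T₂ T₃ T₁
  rw [sumDistinctTriples_rotate] at h₂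
  have h₃ := sumDistinctTriples_not_le_sup hchain p μ hcard hμ T₃ T₁ T₂
  rw [sumDistinctTriples_rotate, sumDistinctTriples_rotate] at h₃
  simp only [cyclicProduct_rotate μ T₃ T₁ T₂, cyclicProduct_rotate μ T₂ T₃ T₁] at h₂ h₃
  refine (sum_filter_distinct_eq_sumDistinctTriples _ (cyclicProduct μ T₁ T₂ T₃)).trans ?_
  rw [sumDistinctTriples_split_sup hchain, sumDistinctTriples_sup_eq_sup hchain p μ hcard hμ,
    sumDistinctTriples_not_le_sup hchain p μ hcard hμ, h₂, h₃, sum_mul_sum_lt_comm,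
    add_assoc, add_assoc, ← sum_add_distrib, ← sum_add_distrib]
  congr 1
  refine sum_congr rfl fun M _ => ?_
  rw [← sum_add_distrib, ← sum_add_distrib]
  exact sum_congr rfl fun L _ => by ring

/-- In a finite directed tree `S` (finite partial order with greatest element `K`,
binary suprema, totally ordered up-sets), where every non-minimal vertex `L`
has exactly `p L ≥ 2` children and the weight `μ` satisfies `μ K > 0` and
`μ J = μ L / p L` for every child `J` of `L`, and `T₁, T₂, T₃ : S → ℝ` are
arbitrary: the cubic trace functional
`Σ_{A,B,C ∈ S_min, pairwise distinct} μ(A)μ(B)μ(C) T₁(sup(A,B)) T₂(sup(B,C)) T₃(sup(C,A))`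
equals the sum over non-minimal vertices given in Lemma 5. -/
theorem trace_cubic_replica_matrices
    {S : Type*} [Fintype S] [SemilatticeSup S]
    (K : S) (hK : ∀ x : S, x ≤ K)
    (hchain : ∀ x y z : S, x ≤ y → x ≤ z → y ≤ z ∨ z ≤ y)
    (p : S → ℕ) (hp : ∀ L : S, ¬ IsMin L → 2 ≤ p L)
    (hcard : ∀ L : S, ¬ IsMin L →
      (Finset.univ.filter (fun J : S => J ⋖ L)).card = p L)
    (μ : S → ℝ) (hμK : 0 < μ K)
    (hμ : ∀ L J : S, J ⋖ L → μ J = μ L / p L)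
    (T₁ T₂ T₃ : S → ℝ) :
    ∑ A ∈ Finset.univ.filter (fun A : S => IsMin A),
      ∑ B ∈ Finset.univ.filter (fun B : S => IsMin B ∧ A ≠ B),
        ∑ C ∈ Finset.univ.filter (fun C : S => IsMin C ∧ B ≠ C ∧ C ≠ A),
          μ A * μ B * μ C * T₁ (A ⊔ B) * T₂ (B ⊔ C) * T₃ (C ⊔ A) =
      (∑ L ∈ Finset.univ.filter (fun L : S => ¬ IsMin L),
        μ L ^ 3 * (1 - (p L : ℝ)⁻¹) * (1 - 2 * (p L : ℝ)⁻¹) *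
          T₁ L * T₂ L * T₃ L)
      + ∑ L ∈ Finset.univ.filter (fun L : S => ¬ IsMin L),
          μ L * (1 - (p L : ℝ)⁻¹) *
            ∑ B ∈ Finset.univ.filter (fun B : S => ¬ IsMin B ∧ B < L),
              μ B ^ 2 * (1 - (p B : ℝ)⁻¹) *
                (T₁ L * T₂ L * T₃ B + T₂ L * T₃ L * T₁ B +
                  T₃ L * T₁ L * T₂ B) :=
  trace_cubic_replica_matrices_general hchain p hcard μ hμ T₁ T₂ T₃
end
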